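/- For n ≥ 3, the automorphism α_n of the free metabelian group M_n, defined on generators by g_i ↦ [[g_1,g_2]g_n, g_i]·g_i for 1 ≤ i < n and g_n ↦ [g_1,g_2]·g_n, has no nontrivial fixed points: if g ∈ M_n satisfies α_n(g) = g, then g = 1. -/

import Mathlib

open scoped commutatorElement
/-- The free metabelian group of rank `n`: the quotient of the free group on `n` generators
by the second term of its derived series (the second derived subgroup). -/
abbrev FreeMetabelian (n : ℕ) :=
  FreeGroup (Fin n) ⧸ derivedSeries (FreeGroup (Fin n)) 2

instance (n : ℕ) : (derivedSeries (FreeGroup (Fin n)) 2).Normal :=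
  derivedSeries_normal _ _

/-- The generators of the free metabelian group; `gen n i` is the image of the free
generator `g_{i+1}` of the paper (indices are `0`-based). -/
def gen (n : ℕ) (i : Fin n) : FreeMetabelian n :=
  QuotientGroup.mk (FreeGroup.of i)


section MW

variable {G : Type*} [Group G] {S : Type*} [Ring S]

/-- Magnus-type group: pairs (a, t) with multiplication (a,t)(b,s) = (ab, t + χ a • s). -/
@[ext]
structure MW (χ : G →* S) (V : Type*) [AddCommGroup V] [Module S V] where
  a : G
  t : V

namespace MW

variable {χ : G →* S} {V : Type*} [AddCommGroup V] [Module S V]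

instance : Group (MW χ V) where
  mul p q := ⟨p.a * q.a, p.t + χ p.a • q.t⟩
  one := ⟨1, 0⟩
  inv p := ⟨p.a⁻¹, -(χ p.a⁻¹ • p.t)⟩
  mul_assoc p q r := by
    refine MW.ext (mul_assoc _ _ _) ?_
    show (p.t + χ p.a • q.t) + χ (p.a * q.a) • r.t
        = p.t + χ p.a • (q.t + χ q.a • r.t)
    simp [map_mul, mul_smul, smul_add, add_assoc]
  one_mul p := by
    refine MW.ext (one_mul _) ?_
    show (0 : V) + χ 1 • p.t = p.t
    simp
  mul_one p := by
    refine MW.ext (mul_one _) ?_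
    show p.t + χ p.a • (0 : V) = p.t
    simp
  inv_mul_cancel p := by
    refine MW.ext (inv_mul_cancel _) ?_
    show -(χ p.a⁻¹ • p.t) + χ p.a⁻¹ • p.t = 0
    simp

@[simp] lemma mul_a (p q : MW χ V) : (p * q).a = p.a * q.a := rfl
@[simp] lemma mul_t (p q : MW χ V) : (p * q).t = p.t + χ p.a • q.t := rfl
@[simp] lemma one_a : (1 : MW χ V).a = 1 := rfl
@[simp] lemma one_t : (1 : MW χ V).t = 0 := rfl
@[simp] lemma inv_a (p : MW χ V) : (p⁻¹).a = p.a⁻¹ := rfl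
@[simp] lemma inv_t (p : MW χ V) : (p⁻¹).t = -(χ p.a⁻¹ • p.t) := rfl

/-- Projection onto the group part. -/
def proj : MW χ V →* G where
  toFun p := p.a
  map_one' := rfl
  map_mul' _ _ := rfl

@[simp] lemma proj_apply (p : MW χ V) : proj p = p.a := rfl

/-- Functoriality in the module coordinate, along a semilinear-type map. -/
def mapMW {G' : Type*} [Group G'] {S' : Type*} [Ring S'] {χ' : G' →* S'}
    {V' : Type*} [AddCommGroup V'] [Module S' V']
    (h : G →* G') (e : S →+* S') (lam : V →+ V')
    (hcompat : ∀ g, χ' (h g) = e (χ g))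
    (hsem : ∀ (s : S) (v : V), lam (s • v) = e s • lam v) :
    MW χ V →* MW χ' V' where
  toFun p := ⟨h p.a, lam p.t⟩
  map_one' := by refine MW.ext (map_one h) ?_; show lam 0 = 0; simp
  map_mul' p q := by
    refine MW.ext (map_mul h _ _) ?_
    show lam (p.t + χ p.a • q.t) = lam p.t + χ' (h p.a) • lam q.t
    rw [map_add, hsem, hcompat]

@[simp] lemma mapMW_a {G' : Type*} [Group G'] {S' : Type*} [Ring S'] {χ' : G' →* S'}
    {V' : Type*} [AddCommGroup V'] [Module S' V']
    (h : G →* G') (e : S →+* S') (lam : V →+ V')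
    (hc : ∀ g, χ' (h g) = e (χ g)) (hs : ∀ (s : S) (v : V), lam (s • v) = e s • lam v)
    (p : MW χ V) :
    (mapMW (χ' := χ') h e lam hc hs p).a = h p.a := rfl

@[simp] lemma mapMW_t {G' : Type*} [Group G'] {S' : Type*} [Ring S'] {χ' : G' →* S'}
    {V' : Type*} [AddCommGroup V'] [Module S' V']
    (h : G →* G') (e : S →+* S') (lam : V →+ V')
    (hc : ∀ g, χ' (h g) = e (χ g)) (hs : ∀ (s : S) (v : V), lam (s • v) = e s • lam v)
    (p : MW χ V) :
    (mapMW (χ' := χ') h e lam hc hs p).t = lam p.t := rfl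

/-- The diagonal homomorphism `g ↦ (g, χ g - 1)` into the rank-one Magnus group. -/
def diag : G →* MW χ S where
  toFun g := ⟨g, χ g - 1⟩
  map_one' := by refine MW.ext rfl ?_; show χ 1 - 1 = 0; simp
  map_mul' g h := by
    refine MW.ext rfl ?_
    show χ (g * h) - 1 = (χ g - 1) + χ g • (χ h - 1)
    rw [map_mul, smul_eq_mul, mul_sub, mul_one]
    abel

@[simp] lemma diag_a (g : G) : (diag (χ := χ) g).a = g := rfl
@[simp] lemma diag_t (g : G) : (diag (χ := χ) g).t = χ g - 1 := rfl

/-- Conjugation formula in `MW`. -/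
lemma conj_eq (p q : MW χ V) :
    p * q * p⁻¹ = ⟨p.a * q.a * p.a⁻¹,
      p.t + χ p.a • q.t - χ (p.a * q.a * p.a⁻¹) • p.t⟩ := by
  refine MW.ext rfl ?_
  show (p.t + χ p.a • q.t) + χ (p.a * q.a) • (-(χ p.a⁻¹ • p.t)) = _
  rw [smul_neg, smul_smul, ← map_mul, sub_eq_add_neg]

/-- If the base group is commutative, `MW` is metabelian. -/
lemma derivedSeries_two_eq_bot (hG : ∀ a b : G, a * b = b * a) :
    derivedSeries (MW χ V) 2 = ⊥ := by
  have h1 : derivedSeries (MW χ V) 1 ≤ MonoidHom.ker (proj (χ := χ) (V := V)) := by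
    rw [derivedSeries_succ]
    rw [Subgroup.commutator_le]
    intro p _ q _
    rw [MonoidHom.mem_ker, map_commutatorElement]
    exact commutatorElement_eq_one_iff_commute.2 (hG _ _)
  rw [derivedSeries_succ, eq_bot_iff, Subgroup.commutator_le]
  intro p hp q hq
  have hpa : p.a = 1 := h1 hp
  have hqa : q.a = 1 := h1 hq
  rw [Subgroup.mem_bot, commutatorElement_eq_one_iff_commute]
  refine MW.ext ?_ ?_
  · show p.a * q.a = q.a * p.a
    rw [hpa, hqa]
  · show p.t + χ p.a • q.t = q.t + χ q.a • p.t
    rw [hpa, hqa, map_one, one_smul, one_smul, add_comm]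

end MW

end MW

noncomputable section SETUP

variable (n : ℕ)

/- Notation:
   F = free group, A = free abelian group (multiplicative), R = ℤ[A], T = R^n,
   ZF = ℤ[F]. -/

abbrev Fgrp := FreeGroup (Fin n)
abbrev Agrp := Multiplicative (Fin n →₀ ℤ)
abbrev Rring := MonoidAlgebra ℤ (Agrp n)
abbrev Tmod := Fin n → Rring n
abbrev ZF := MonoidAlgebra ℤ (Fgrp n)
abbrev TF := Fin n → ZF n

def xg (i : Fin n) : Agrp n := Multiplicative.ofAdd (Finsupp.single i 1)

def chiA : Agrp n →* Rring n := MonoidAlgebra.of ℤ (Agrp n)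
def chiF : Fgrp n →* ZF n := MonoidAlgebra.of ℤ (Fgrp n)

/-- abelianization homomorphism F → A -/
def abar : Fgrp n →* Agrp n := FreeGroup.lift (xg n)

/-- induced ring hom ℤ[F] → ℤ[A] -/
def ebar : ZF n →+* Rring n := MonoidAlgebra.mapDomainRingHom ℤ (abar n)

/-- the Magnus group over A -/
abbrev Wgrp := MW (chiA n) (Tmod n)
/-- the Magnus group over F itself -/
abbrev What := MW (chiF n) (TF n)

/-- the Magnus embedding homomorphism (on the free group) -/
def Phi : Fgrp n →* Wgrp n := FreeGroup.lift fun i => ⟨xg n i, Pi.single i 1⟩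
/-- Fox-derivative homomorphism over ℤ[F] -/
def PhiHat : Fgrp n →* What n := FreeGroup.lift fun i => ⟨FreeGroup.of i, Pi.single i 1⟩

@[simp] lemma Phi_of (i : Fin n) : Phi n (FreeGroup.of i) = ⟨xg n i, Pi.single i 1⟩ :=
  FreeGroup.lift_apply_of
@[simp] lemma PhiHat_of (i : Fin n) : PhiHat n (FreeGroup.of i) = ⟨FreeGroup.of i, Pi.single i 1⟩ :=
  FreeGroup.lift_apply_of
@[simp] lemma abar_of (i : Fin n) : abar n (FreeGroup.of i) = xg n i := FreeGroup.lift_apply_of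

@[simp] lemma ebar_single (f : Fgrp n) (c : ℤ) :
    ebar n (MonoidAlgebra.single f c) = MonoidAlgebra.single (abar n f) c := by
  simp [ebar, MonoidAlgebra.mapDomainRingHom]

lemma ebar_chiF (f : Fgrp n) : ebar n (chiF n f) = chiA n (abar n f) := by
  simp [chiF, chiA, MonoidAlgebra.of_apply]

/-- group part of Phi is abar -/
lemma proj_Phi : (MW.proj).comp (Phi n) = abar n := by
  apply FreeGroup.ext_hom
  intro i
  simp

lemma Phi_a (w : Fgrp n) : (Phi n w).a = abar n w := by
  have := congrArg (fun h => h w) (proj_Phi n)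
  simpa using this

/-- ebar applied entrywise -/
def ebarT : TF n →+ Tmod n where
  toFun t := fun i => ebar n (t i)
  map_zero' := by funext i; simp
  map_add' x y := by funext i; simp

lemma ebarT_sem (s : ZF n) (v : TF n) : ebarT n (s • v) = ebar n s • ebarT n v := by
  funext i
  simp [ebarT]

/-- the comparison homomorphism What → Wgrp -/
def hatToW : What n →* Wgrp n :=
  MW.mapMW (abar n) (ebar n) (ebarT n) (fun g => (ebar_chiF n g).symm) (ebarT_sem n)

lemma hatToW_PhiHat : (hatToW n).comp (PhiHat n) = Phi n := by
  apply FreeGroup.ext_hom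
  intro i
  simp only [MonoidHom.comp_apply, PhiHat_of, Phi_of]
  refine MW.ext ?_ ?_
  · simp [hatToW]
  · show ebarT n (Pi.single i 1) = Pi.single i (1 : Rring n)
    funext j
    rcases eq_or_ne j i with rfl | h
    · simp [ebarT]
    · simp [ebarT, Pi.single_apply, h]

/-- Fox fundamental identity, over ℤ[F]:  ∑ᵢ (∂w/∂xᵢ)(xᵢ - 1) = w - 1. -/
def sumXF : TF n →+ ZF n where
  toFun t := ∑ i, t i * (chiF n (FreeGroup.of i) - 1)
  map_zero' := by simp
  map_add' x y := by simp [add_mul, Finset.sum_add_distrib]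

lemma sumXF_sem (s : ZF n) (v : TF n) : sumXF n (s • v) = s • sumXF n v := by
  simp [sumXF, smul_eq_mul, Finset.mul_sum, mul_assoc]

def hatToDiag : What n →* MW (chiF n) (ZF n) :=
  MW.mapMW (MonoidHom.id _) (RingHom.id _) (sumXF n) (fun _ => rfl) (sumXF_sem n)

lemma fox_identity (w : Fgrp n) :
    ∑ i, (PhiHat n w).t i * (chiF n (FreeGroup.of i) - 1) = chiF n w - 1 := by
  have h : (hatToDiag n).comp (PhiHat n) = MW.diag.comp (MonoidHom.id _) := by
    apply FreeGroup.ext_hom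
    intro i
    simp only [MonoidHom.comp_apply, PhiHat_of, MonoidHom.id_apply]
    refine MW.ext ?_ ?_
    · simp [hatToDiag]
    · show sumXF n (Pi.single i 1) = chiF n (FreeGroup.of i) - 1
      simp [sumXF, Pi.single_apply, ite_mul]
  have := congrArg (fun h => (h w).t) h
  simpa [hatToDiag, sumXF] using this

/-- Fox fundamental identity over ℤ[A]. -/
def sumXA : Tmod n →+ Rring n where
  toFun t := ∑ i, t i * (chiA n (xg n i) - 1)
  map_zero' := by simp
  map_add' x y := by simp [add_mul, Finset.sum_add_distrib]

lemma sumXA_sem (s : Rring n) (v : Tmod n) : sumXA n (s • v) = s • sumXA n v := by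
  simp [sumXA, smul_eq_mul, Finset.mul_sum, mul_assoc]

lemma fox_identity_A (w : Fgrp n) :
    ∑ i, (Phi n w).t i * (chiA n (xg n i) - 1) = chiA n (abar n w) - 1 := by
  have h : (MW.mapMW (MonoidHom.id _) (RingHom.id _) (sumXA n) (fun _ => rfl)
      (sumXA_sem n)).comp (Phi n) = (MW.diag (χ := chiA n)).comp (abar n) := by
    apply FreeGroup.ext_hom
    intro i
    simp only [MonoidHom.comp_apply, Phi_of]
    refine MW.ext ?_ ?_
    · simp
    · show sumXA n (Pi.single i 1) = chiA n (abar n (FreeGroup.of i)) - 1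
      simp [sumXA, Pi.single_apply, ite_mul]
  have := congrArg (fun h => (h w).t) h
  simpa [sumXA] using this

end SETUP
noncomputable section SEC2

variable (n : ℕ)

/-- homomorphism A → Abelianization F splitting abar -/
def h2 : Agrp n →* Abelianization (Fgrp n) :=
  AddMonoidHom.toMultiplicativeLeft
    (Finsupp.liftAddHom fun i =>
      (zmultiplesHom _) (Additive.ofMul (Abelianization.of (FreeGroup.of i))))

lemma h2_abar : (h2 n).comp (abar n) = Abelianization.of := by
  apply FreeGroup.ext_hom
  intro i
  simp only [MonoidHom.comp_apply, abar_of]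
  simp [h2, xg, AddMonoidHom.toMultiplicativeLeft, Finsupp.liftAddHom_apply_single]

lemma ker_abar_eq : MonoidHom.ker (abar n) = derivedSeries (Fgrp n) 1 := by
  rw [derivedSeries_one]
  apply le_antisymm
  · intro w hw
    rw [MonoidHom.mem_ker] at hw
    have h1 : Abelianization.of w = 1 := by
      have := congrArg (fun h => h w) (h2_abar n)
      simp only [MonoidHom.comp_apply] at this
      rw [← this, hw, map_one]
    exact (QuotientGroup.eq_one_iff w).mp h1
  · rw [commutator, Subgroup.commutator_le]
    intro p _ q _
    rw [MonoidHom.mem_ker, map_commutatorElement]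
    exact commutatorElement_eq_one_iff_commute.2 (mul_comm _ _)

end SEC2
noncomputable section SEC3

variable (n : ℕ)

/-! ### A transversal of the commutator subgroup -/

private lemma toAdd_list_prod' {M : Type*} [AddMonoid M] (l : List (Multiplicative M)) :
    Multiplicative.toAdd l.prod = (l.map Multiplicative.toAdd).sum := by
  induction l with
  | nil => rfl
  | cons x xs ih => rw [List.prod_cons, List.map_cons, List.sum_cons, toAdd_mul, ih]

/-- section A → F of `abar`: `a ↦ ∏ gᵢ^{aᵢ}`. -/
def sigma (a : Agrp n) : Fgrp n :=
  ((List.finRange n).map fun i => (FreeGroup.of i) ^ ((Multiplicative.toAdd a) i)).prod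

lemma abar_sigma (a : Agrp n) : abar n (sigma n a) = a := by
  unfold sigma
  rw [map_list_prod, List.map_map]
  apply Multiplicative.toAdd.injective
  rw [toAdd_list_prod', List.map_map]
  have hfun : (Multiplicative.toAdd ∘ (abar n) ∘ fun i =>
      FreeGroup.of i ^ (Multiplicative.toAdd a) i)
      = fun i => Finsupp.single i ((Multiplicative.toAdd a) i) := by
    funext i
    show Multiplicative.toAdd (abar n (FreeGroup.of i ^ (Multiplicative.toAdd a) i)) = _
    rw [map_zpow, abar_of]
    show Multiplicative.toAdd ((Multiplicative.ofAdd (Finsupp.single i 1)) ^ _) = _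
    rw [← ofAdd_zsmul, toAdd_ofAdd, Finsupp.smul_single, smul_eq_mul, mul_one]
  rw [hfun, ← Fin.sum_univ_def, Finsupp.univ_sum_single]

lemma sigma_one : sigma n 1 = 1 := by
  unfold sigma
  have : ((List.finRange n).map fun i =>
      (FreeGroup.of i) ^ ((Multiplicative.toAdd (1 : Agrp n)) i)) =
      (List.finRange n).map fun _ => (1 : Fgrp n) := by
    apply List.map_congr_left
    intro i _
    show (FreeGroup.of i) ^ ((0 : Fin n →₀ ℤ) i) = 1
    simp
  rw [this]
  simp

/-! ### augmentation and ideals -/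

/-- augmentation ℤ[F] → ℤ. -/
def aug : ZF n →+* ℤ :=
  MonoidAlgebra.liftNCRingHom (RingHom.id ℤ) 1 (fun _ _ => Commute.all _ _)

@[simp] lemma aug_single (f : Fgrp n) (c : ℤ) : aug n (MonoidAlgebra.single f c) = c := by
  simp [aug, MonoidAlgebra.liftNCRingHom, MonoidAlgebra.liftNC_single]

lemma chiF_apply (f : Fgrp n) : chiF n f = MonoidAlgebra.single f 1 := rfl

lemma ZF_one_def : (1 : ZF n) = MonoidAlgebra.single 1 1 := rfl

@[simp] lemma aug_chiF (f : Fgrp n) : aug n (chiF n f) = 1 := by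
  rw [chiF_apply, aug_single]

def K0 : AddSubgroup (ZF n) :=
  AddSubgroup.closure {x | ∃ m f, abar n m = 1 ∧ x = (chiF n m - 1) * chiF n f}
def K1 : AddSubgroup (ZF n) :=
  AddSubgroup.closure {x | ∃ m y, abar n m = 1 ∧ aug n y = 0 ∧ x = (chiF n m - 1) * y}
def K2 : AddSubgroup (ZF n) :=
  AddSubgroup.closure
    {x | ∃ m m', abar n m = 1 ∧ abar n m' = 1 ∧ x = (chiF n m - 1) * (chiF n m' - 1)}
def Zspan : AddSubgroup (ZF n) :=
  AddSubgroup.closure {x | ∃ m, abar n m = 1 ∧ x = chiF n m - 1}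

/-- replace-by-coset-representative map -/
def rho : ZF n →+ ZF n where
  toFun x := MonoidAlgebra.mapDomain (fun f => sigma n (abar n f)) x
  map_zero' := MonoidAlgebra.mapDomain_zero _
  map_add' := MonoidAlgebra.mapDomain_add _

lemma rho_single (f : Fgrp n) (c : ℤ) :
    rho n (MonoidAlgebra.single f c) = MonoidAlgebra.single (sigma n (abar n f)) c := by
  show MonoidAlgebra.mapDomain _ (MonoidAlgebra.single f c) = _
  rw [MonoidAlgebra.mapDomain_single]

private theorem ZF_induction_linear {p : ZF n → Prop} (h0 : p 0)
    (hadd : ∀ f g : ZF n, p f → p g → p (f + g))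
    (hsingle : ∀ (f : Fgrp n) (c : ℤ), p (MonoidAlgebra.single f c)) : ∀ x : ZF n, p x := by
  intro x
  induction x using MonoidAlgebra.induction_linear with
  | zero => exact h0
  | add f g hf hg => exact hadd f g hf hg
  | single f c => exact hsingle f c

private theorem ZF_induction {p : ZF n → Prop} (h0 : p 0)
    (ha : ∀ (f : Fgrp n) (c : ℤ) (g : ZF n), f ∉ g.coeff.support → c ≠ 0 → p g →
      p (MonoidAlgebra.single f c + g)) : ∀ x : ZF n, p x := by
  intro x
  induction x using MonoidAlgebra.induction with
  | zero => exact h0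
  | single_add f c g hfg hc ih => exact ha f c g hfg hc ih

private lemma support_single_add (f : Fgrp n) (c : ℤ) (g : ZF n)
    (hfg : f ∉ g.coeff.support) (hc : c ≠ 0) :
    (MonoidAlgebra.single f c + g).coeff.support = insert f g.coeff.support := by
  have h : ∀ g' : Fgrp n →₀ ℤ, f ∉ g'.support →
      ((Finsupp.single f c) + g').support = insert f g'.support := by
    intro g' h'
    rw [Finsupp.support_add_eq, Finsupp.support_single_ne_zero _ hc, ← Finset.insert_eq]
    rw [Finsupp.support_single_ne_zero _ hc]
    simpa using h'
  exact h g.coeff hfg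

lemma ebar_eq_mapDomain (a : ZF n) :
    (ebar n a).coeff = Finsupp.mapDomain (abar n) a.coeff := rfl

lemma mem_K0 (a : ZF n) (ha : ebar n a = 0) : a ∈ K0 n := by
  have hrho : rho n a = 0 := by
    show MonoidAlgebra.ofCoeff (Finsupp.mapDomain (fun f => sigma n (abar n f)) a.coeff) = 0
    rw [show (fun f => sigma n (abar n f)) = (sigma n) ∘ (abar n) from rfl,
      Finsupp.mapDomain_comp, ← ebar_eq_mapDomain, ha, MonoidAlgebra.coeff_zero,
      Finsupp.mapDomain_zero, MonoidAlgebra.ofCoeff_zero]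
  have key : ∀ b : ZF n, b - rho n b ∈ K0 n := by
    refine ZF_induction_linear n ?_ ?_ ?_
    · rw [map_zero, sub_zero]; exact zero_mem _
    · intro f g hf hg
      rw [map_add,
        show (f + g) - (rho n f + rho n g) = (f - rho n f) + (g - rho n g) by abel]
      exact add_mem hf hg
    · intro f c
      rw [rho_single]
      have hgen : (chiF n (f * (sigma n (abar n f))⁻¹) - 1) * chiF n (sigma n (abar n f))
          = MonoidAlgebra.single f 1 - MonoidAlgebra.single (sigma n (abar n f)) 1 := by
        rw [chiF_apply, chiF_apply, sub_mul, one_mul, MonoidAlgebra.single_mul_single,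
          inv_mul_cancel_right, one_mul]
      have hmem : (MonoidAlgebra.single f 1 : ZF n)
          - MonoidAlgebra.single (sigma n (abar n f)) 1 ∈ K0 n := by
        rw [← hgen]
        apply AddSubgroup.subset_closure
        exact ⟨f * (sigma n (abar n f))⁻¹, sigma n (abar n f),
          by rw [map_mul, map_inv, abar_sigma, mul_inv_cancel], rfl⟩
      have h2 := AddSubgroup.zsmul_mem _ hmem c
      rw [smul_sub, MonoidAlgebra.smul_single, MonoidAlgebra.smul_single, smul_eq_mul, mul_one] at h2
      exact h2
  have := key a
  rwa [hrho, sub_zero] at this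

lemma K0_mul (a : ZF n) (ha : a ∈ K0 n) (r : ZF n) (hr : aug n r = 0) : a * r ∈ K1 n := by
  induction ha using AddSubgroup.closure_induction with
  | mem x hx =>
    obtain ⟨m, f, hm, rfl⟩ := hx
    rw [mul_assoc]
    apply AddSubgroup.subset_closure
    exact ⟨m, chiF n f * r, hm, by rw [map_mul, aug_chiF, one_mul, hr], rfl⟩
  | zero => rw [zero_mul]; exact zero_mem _
  | add x y hx hy hx' hy' => rw [add_mul]; exact add_mem hx' hy'
  | neg x hx hx' => rw [neg_mul]; exact neg_mem hx'

/-- projection onto ℤ[N]-part along the transversal -/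
def pmap : ZF n →+ ZF n where
  toFun x := MonoidAlgebra.mapDomain (fun f => f * (sigma n (abar n f))⁻¹) x
  map_zero' := MonoidAlgebra.mapDomain_zero _
  map_add' := MonoidAlgebra.mapDomain_add _

lemma pmap_single (f : Fgrp n) (c : ℤ) :
    pmap n (MonoidAlgebra.single f c)
      = MonoidAlgebra.single (f * (sigma n (abar n f))⁻¹) c := by
  show MonoidAlgebra.mapDomain _ (MonoidAlgebra.single f c) = _
  rw [MonoidAlgebra.mapDomain_single]

lemma pmap_mul_left (m : Fgrp n) (hm : abar n m = 1) (y : ZF n) :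
    pmap n ((chiF n m - 1) * y) = (chiF n m - 1) * pmap n y := by
  have h : (pmap n).comp (AddMonoidHom.mulLeft (chiF n m - 1)) =
      (AddMonoidHom.mulLeft (chiF n m - 1)).comp (pmap n) := by
    apply MonoidAlgebra.addMonoidHom_ext
    intro f c
    show pmap n ((chiF n m - 1) * MonoidAlgebra.single f c)
      = (chiF n m - 1) * pmap n (MonoidAlgebra.single f c)
    rw [chiF_apply, sub_mul, one_mul, MonoidAlgebra.single_mul_single, one_mul, map_sub,
      pmap_single, pmap_single]
    rw [map_mul, hm, one_mul, sub_mul, one_mul, MonoidAlgebra.single_mul_single, one_mul,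
      mul_assoc]
  exact DFunLike.congr_fun h y

lemma aug_pmap (y : ZF n) : aug n (pmap n y) = aug n y := by
  have h : ((aug n : ZF n →+* ℤ) : ZF n →+ ℤ).comp (pmap n)
      = ((aug n : ZF n →+* ℤ) : ZF n →+ ℤ) := by
    apply MonoidAlgebra.addMonoidHom_ext
    intro f c
    show aug n (pmap n (MonoidAlgebra.single f c)) = aug n (MonoidAlgebra.single f c)
    rw [pmap_single, aug_single, aug_single]
  exact DFunLike.congr_fun h y

lemma pmap_support (y : ZF n) (f : Fgrp n) (hf : f ∈ (pmap n y).coeff.support) :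
    abar n f = 1 := by
  classical
  have hsub : (pmap n y).coeff.support ⊆
      Finset.image (fun f => f * (sigma n (abar n f))⁻¹) y.coeff.support :=
    Finsupp.mapDomain_support
  have hf' := hsub hf
  simp only [Finset.mem_image] at hf'
  obtain ⟨g, _, rfl⟩ := hf'
  rw [map_mul, map_inv, abar_sigma, mul_inv_cancel]

lemma mem_Zspan (z : ZF n) (hs : ∀ f ∈ z.coeff.support, abar n f = 1) (hz : aug n z = 0) :
    z ∈ Zspan n := by
  classical
  have key : ∀ z : ZF n, (∀ f ∈ z.coeff.support, abar n f = 1) →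
      z - (aug n z) • (1 : ZF n) ∈ Zspan n := by
    refine ZF_induction n ?_ ?_
    · intro _
      rw [map_zero, zero_smul, sub_zero]
      exact zero_mem _
    · intro f c g hfg hc ih hsup
      rw [support_single_add n f c g hfg hc] at hsup
      have hsupp_sub : ∀ f' ∈ g.coeff.support, abar n f' = 1 := fun f' hf' =>
        hsup f' (Finset.mem_insert_of_mem hf')
      have hf1 : abar n f = 1 := hsup f (Finset.mem_insert_self _ _)
      have haug : aug n (MonoidAlgebra.single f c + g) = c + aug n g := by
        rw [map_add, aug_single]
      rw [haug,
        show (MonoidAlgebra.single f c + g) - (c + aug n g) • (1 : ZF n)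
          = c • ((chiF n f : ZF n) - 1) + (g - aug n g • (1 : ZF n)) by
          rw [chiF_apply, ZF_one_def, smul_sub, add_smul,
            show (MonoidAlgebra.single f c : ZF n) = c • MonoidAlgebra.single f 1 by
              rw [MonoidAlgebra.smul_single, smul_eq_mul, mul_one]]
          abel]
      refine add_mem (AddSubgroup.zsmul_mem _ ?_ c) (ih hsupp_sub)
      exact AddSubgroup.subset_closure ⟨f, hf1, rfl⟩
  have := key z hs
  rwa [hz, zero_smul, sub_zero] at this

lemma Zspan_mul_mem (m : Fgrp n) (hm : abar n m = 1) (z : ZF n) (hz : z ∈ Zspan n) :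
    (chiF n m - 1) * z ∈ K2 n := by
  induction hz using AddSubgroup.closure_induction with
  | mem x hx =>
    obtain ⟨m', hm', rfl⟩ := hx
    exact AddSubgroup.subset_closure ⟨m, m', hm, hm', rfl⟩
  | zero => rw [mul_zero]; exact zero_mem _
  | add x y hx hy hx' hy' => rw [mul_add]; exact add_mem hx' hy'
  | neg x hx hx' => rw [mul_neg]; exact neg_mem hx'

lemma pmap_K1 (x : ZF n) (hx : x ∈ K1 n) : pmap n x ∈ K2 n := by
  induction hx using AddSubgroup.closure_induction with
  | mem x hx =>
    obtain ⟨m, y, hm, hy, rfl⟩ := hx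
    rw [pmap_mul_left n m hm]
    refine Zspan_mul_mem n m hm _ (mem_Zspan n _ (pmap_support n y) ?_)
    rw [aug_pmap, hy]
  | zero => rw [map_zero]; exact zero_mem _
  | add x y hx hy hx' hy' => rw [map_add]; exact add_mem hx' hy'
  | neg x hx hx' => rw [map_neg]; exact neg_mem hx'

/-! ### Abelianization of N -/

def toN (f : Fgrp n) : ↥(MonoidHom.ker (abar n)) :=
  ⟨f * (sigma n (abar n f))⁻¹, by
    rw [MonoidHom.mem_ker, map_mul, map_inv, abar_sigma, mul_inv_cancel]⟩

def AbMap : ZF n →+ Additive (Abelianization ↥(MonoidHom.ker (abar n))) :=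
  (Finsupp.liftAddHom fun f =>
    (zmultiplesHom _) (Additive.ofMul (Abelianization.of (toN n f)))).comp
    MonoidAlgebra.coeffAddEquiv.toAddMonoidHom

lemma AbMap_single (f : Fgrp n) (c : ℤ) :
    AbMap n (MonoidAlgebra.single f c)
      = c • Additive.ofMul (Abelianization.of (toN n f)) :=
  Finsupp.liftAddHom_apply_single _ f c

lemma toN_mem (w : Fgrp n) (hw : abar n w = 1) : toN n w = ⟨w, hw⟩ := by
  apply Subtype.ext
  show w * (sigma n (abar n w))⁻¹ = w
  rw [hw, sigma_one, inv_one, mul_one]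

lemma AbMap_chiF_sub_one (w : Fgrp n) (hw : abar n w = 1) :
    AbMap n (chiF n w - 1) = Additive.ofMul (Abelianization.of (⟨w, hw⟩ :
      ↥(MonoidHom.ker (abar n)))) := by
  rw [chiF_apply, ZF_one_def, map_sub, AbMap_single, AbMap_single, toN_mem n w hw,
    toN_mem n 1 (map_one _), one_zsmul, one_zsmul]
  have h1 : (⟨(1 : Fgrp n), map_one _⟩ : ↥(MonoidHom.ker (abar n))) = 1 := rfl
  rw [h1, map_one]
  show Additive.ofMul (Abelianization.of _) - Additive.ofMul 1 = Additive.ofMul (Abelianization.of _)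
  rw [ofMul_one, sub_zero]

lemma AbMap_K2 (x : ZF n) (hx : x ∈ K2 n) : AbMap n x = 0 := by
  induction hx using AddSubgroup.closure_induction with
  | mem x hx =>
    obtain ⟨m, m', hm, hm', rfl⟩ := hx
    have hmm' : abar n (m * m') = 1 := by rw [map_mul, hm, hm', one_mul]
    have expand : (chiF n m - 1) * (chiF n m' - 1)
        = ((chiF n (m * m') - 1) - (chiF n m - 1)) - (chiF n m' - 1) := by
      rw [map_mul, mul_sub, sub_mul, mul_one, one_mul]
      abel
    rw [expand, map_sub, map_sub,
      AbMap_chiF_sub_one n m hm, AbMap_chiF_sub_one n m' hm',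
      AbMap_chiF_sub_one n (m * m') hmm']
    have hmul : (⟨m * m', hmm'⟩ : ↥(MonoidHom.ker (abar n)))
        = ⟨m, hm⟩ * ⟨m', hm'⟩ := rfl
    rw [hmul, map_mul]
    show Additive.ofMul (Abelianization.of _ * Abelianization.of _) -
      Additive.ofMul (Abelianization.of _) - Additive.ofMul (Abelianization.of _) = 0
    rw [ofMul_mul]
    abel
  | zero => exact map_zero _
  | add x y hx hy hx' hy' => rw [map_add, hx', hy', add_zero]
  | neg x hx hx' => rw [map_neg, hx', neg_zero]

/-! ### the Magnus kernel theorem -/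

theorem magnus_injective (w : Fgrp n) (hPhi : Phi n w = 1) :
    w ∈ derivedSeries (Fgrp n) 2 := by
  have habar : abar n w = 1 := by
    rw [← Phi_a, hPhi]; rfl
  have hfox : ∀ i, ebar n ((PhiHat n w).t i) = 0 := by
    intro i
    have h := congrArg (fun h => (h w).t) (hatToW_PhiHat n)
    simp only [MonoidHom.comp_apply] at h
    have h2 : (Phi n w).t = ebarT n ((PhiHat n w).t) := h.symm
    rw [hPhi] at h2
    have h3 := congrArg (fun t => t i) h2
    simpa [ebarT] using h3.symm
  have hK1 : chiF n w - 1 ∈ K1 n := by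
    rw [← fox_identity n w]
    apply sum_mem
    intro i _
    apply K0_mul n _ (mem_K0 n _ (hfox i))
    rw [map_sub, aug_chiF, map_one, sub_self]
  have hp : pmap n (chiF n w - 1) = chiF n w - 1 := by
    rw [chiF_apply, ZF_one_def, map_sub, pmap_single, pmap_single, habar, sigma_one,
      map_one, sigma_one, inv_one, mul_one, mul_one]
  have hK2 : chiF n w - 1 ∈ K2 n := by rw [← hp]; exact pmap_K1 n _ hK1
  have hAb : Abelianization.of (⟨w, habar⟩ : ↥(MonoidHom.ker (abar n))) = 1 := by
    have h := AbMap_K2 n _ hK2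
    rw [AbMap_chiF_sub_one n w habar] at h
    exact h
  have hcomm : (⟨w, habar⟩ : ↥(MonoidHom.ker (abar n))) ∈ commutator ↥(MonoidHom.ker (abar n)) :=
    (QuotientGroup.eq_one_iff _).mp hAb
  have hmap : w ∈ Subgroup.map (MonoidHom.ker (abar n)).subtype
      (commutator ↥(MonoidHom.ker (abar n))) :=
    ⟨_, hcomm, rfl⟩
  rw [commutator, Subgroup.map_commutator, ← MonoidHom.range_eq_map,
    Subgroup.subtype_range] at hmap
  rw [show (2 : ℕ) = 1 + 1 from rfl, derivedSeries_succ, ← ker_abar_eq]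
  exact hmap

end SEC3
noncomputable section SEC4

variable (n : ℕ)

/-! ### Phi factors through the free metabelian group -/

lemma Phi_ker : derivedSeries (Fgrp n) 2 ≤ MonoidHom.ker (Phi n) := by
  intro w hw
  rw [MonoidHom.mem_ker]
  have h : Phi n w ∈ derivedSeries (Wgrp n) 2 :=
    map_derivedSeries_le_derivedSeries (Phi n) 2 (Subgroup.mem_map_of_mem _ hw)
  rw [MW.derivedSeries_two_eq_bot (fun a b => mul_comm a b)] at h
  exact Subgroup.mem_bot.mp h

/-! ### the twisting endomorphism β and the associated data -/

variable (i0 i1 l : Fin n)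

def cF : Fgrp n := ⁅FreeGroup.of i0, FreeGroup.of i1⁆ * FreeGroup.of l

def betaF : Fgrp n →* Fgrp n :=
  FreeGroup.lift fun i => if i = l then ⁅FreeGroup.of i0, FreeGroup.of i1⁆ * FreeGroup.of i
    else ⁅cF n i0 i1 l, FreeGroup.of i⁆ * FreeGroup.of i

def PsiH : Fgrp n →* Wgrp n := (Phi n).comp (betaF n i0 i1 l)

def dvec (i : Fin n) : Tmod n := (PsiH n i0 i1 l (FreeGroup.of i)).t - Pi.single i 1

lemma comm_conj (a b : Agrp n) : a * b * a⁻¹ = b := by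
  rw [mul_comm a b, mul_inv_cancel_right]

lemma abar_comm (x y : Fgrp n) : abar n ⁅x, y⁆ = 1 := by
  rw [map_commutatorElement]
  exact commutatorElement_eq_one_iff_commute.2 (mul_comm _ _)

lemma abar_cF : abar n (cF n i0 i1 l) = xg n l := by
  rw [cF, map_mul, abar_comm, one_mul, abar_of]

lemma abar_betaF (i : Fin n) : abar n (betaF n i0 i1 l (FreeGroup.of i)) = xg n i := by
  rw [betaF, FreeGroup.lift_apply_of]
  split_ifs with h
  · rw [map_mul, abar_comm, one_mul, abar_of]
  · rw [map_mul, abar_comm, one_mul, abar_of]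

lemma PsiH_of_a (i : Fin n) : (PsiH n i0 i1 l (FreeGroup.of i)).a = xg n i := by
  rw [PsiH, MonoidHom.comp_apply, Phi_a, abar_betaF]

/-! ### the derivation comparison homomorphism -/

def Lhom : Tmod n →+ Tmod n where
  toFun v := ∑ i, v i • dvec n i0 i1 l i
  map_zero' := by simp
  map_add' x y := by
    simp only [Pi.add_apply, add_smul]
    rw [Finset.sum_add_distrib]

@[simp] lemma Lhom_apply (v : Tmod n) :
    Lhom n i0 i1 l v = ∑ i, v i • dvec n i0 i1 l i := rfl

lemma Lhom_sem (s : Rring n) (v : Tmod n) :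
    Lhom n i0 i1 l (s • v) = s • Lhom n i0 i1 l v := by
  rw [Lhom_apply, Lhom_apply, Finset.smul_sum]
  apply Finset.sum_congr rfl
  intro i _
  rw [Pi.smul_apply, smul_eq_mul, mul_smul]

def thetaA : Tmod n →+ Tmod n := AddMonoidHom.id _ + Lhom n i0 i1 l

lemma thetaA_sem (s : Rring n) (v : Tmod n) :
    thetaA n i0 i1 l (s • v) = s • thetaA n i0 i1 l v := by
  show s • v + Lhom n i0 i1 l (s • v) = s • (v + Lhom n i0 i1 l v)
  rw [Lhom_sem, smul_add]

def Theta : Fgrp n →* Wgrp n :=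
  (MW.mapMW (MonoidHom.id _) (RingHom.id _) (thetaA n i0 i1 l) (fun _ => rfl)
    (thetaA_sem n i0 i1 l)).comp (Phi n)

lemma Lhom_single (i : Fin n) :
    Lhom n i0 i1 l (Pi.single i 1) = dvec n i0 i1 l i := by
  rw [Lhom_apply, Finset.sum_eq_single i]
  · rw [Pi.single_eq_same, one_smul]
  · intro b _ hb
    rw [Pi.single_eq_of_ne hb, zero_smul]
  · intro h; exact absurd (Finset.mem_univ i) h

lemma Theta_eq_PsiH : Theta n i0 i1 l = PsiH n i0 i1 l := by
  apply FreeGroup.ext_hom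
  intro i
  rw [Theta, MonoidHom.comp_apply, Phi_of]
  refine MW.ext ?_ ?_
  · show xg n i = (PsiH n i0 i1 l (FreeGroup.of i)).a
    rw [PsiH_of_a]
  · show Pi.single i 1 + Lhom n i0 i1 l (Pi.single i 1) = (PsiH n i0 i1 l (FreeGroup.of i)).t
    rw [Lhom_single, dvec, add_sub_cancel]

/-- the key consequence of being a fixed point -/
lemma L_eq_zero (w : Fgrp n) (hfix : PsiH n i0 i1 l w = Phi n w) :
    Lhom n i0 i1 l ((Phi n w).t) = 0 := by
  have h := congrArg (fun h => (h w).t) (Theta_eq_PsiH n i0 i1 l)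
  simp only [Theta, MonoidHom.comp_apply] at h
  rw [hfix] at h
  have h2 : (Phi n w).t + Lhom n i0 i1 l ((Phi n w).t) = (Phi n w).t := h
  have h3 := congrArg (fun t => t - (Phi n w).t) h2
  simp only [add_sub_cancel_left, sub_self] at h3
  exact h3

/-! ### explicit computation of the twisting data -/

lemma Phi_cF_t :
    (Phi n (cF n i0 i1 l)).t
      = (Pi.single i0 1 : Tmod n) + chiA n (xg n i0) • (Pi.single i1 1 : Tmod n)
        - chiA n (xg n i1) • (Pi.single i0 1 : Tmod n) - (Pi.single i1 1 : Tmod n)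
        + (Pi.single l 1 : Tmod n) := by
  have hcf : cF n i0 i1 l = FreeGroup.of i0 * FreeGroup.of i1 * (FreeGroup.of i0)⁻¹ *
      (FreeGroup.of i1)⁻¹ * FreeGroup.of l := rfl
  rw [hcf]
  simp only [map_mul, map_inv, Phi_of]
  simp only [MW.mul_t, MW.mul_a, MW.inv_t, MW.inv_a, smul_neg, smul_smul, ← map_mul]
  simp only [comm_conj, mul_inv_cancel, map_one, one_smul]
  abel

lemma Phi_cF_a : (Phi n (cF n i0 i1 l)).a = xg n l := by
  rw [Phi_a, abar_cF]

lemma PsiH_of_l : PsiH n i0 i1 l (FreeGroup.of l) = Phi n (cF n i0 i1 l) := by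
  rw [PsiH, MonoidHom.comp_apply, betaF, FreeGroup.lift_apply_of, if_pos rfl]
  rfl

lemma PsiH_of_ne (i : Fin n) (hi : i ≠ l) :
    PsiH n i0 i1 l (FreeGroup.of i)
      = Phi n (cF n i0 i1 l) * Phi n (FreeGroup.of i) * (Phi n (cF n i0 i1 l))⁻¹ := by
  rw [PsiH, MonoidHom.comp_apply, betaF, FreeGroup.lift_apply_of, if_neg hi]
  rw [show ⁅cF n i0 i1 l, FreeGroup.of i⁆ * FreeGroup.of i
    = cF n i0 i1 l * FreeGroup.of i * (cF n i0 i1 l)⁻¹ by group]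
  rw [map_mul, map_mul, map_inv]

/-- the uniform formula for the twisting vectors. -/
lemma dvec_eq (i : Fin n) :
    dvec n i0 i1 l i
      = (1 - chiA n (xg n i)) • (Phi n (cF n i0 i1 l)).t
        + (chiA n (xg n l) - 1) • (Pi.single i 1 : Tmod n)
        + (if i = l then chiA n (xg n l) • ((Phi n (cF n i0 i1 l)).t - (Pi.single l 1 : Tmod n))
            else 0) := by
  by_cases hi : i = l
  · subst hi
    rw [if_pos rfl, dvec, PsiH_of_l]
    module
  · rw [if_neg hi, dvec, PsiH_of_ne n i0 i1 l i hi, MW.conj_eq]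
    simp only [MW.mul_a, MW.mul_t, Phi_of, Phi_cF_a]
    rw [comm_conj]
    module

end SEC4
noncomputable section SEC5

variable (n : ℕ)

private theorem MAZ_induction_linear {G : Type*} [Monoid G] {p : MonoidAlgebra ℤ G → Prop}
    (h0 : p 0) (hadd : ∀ f g : MonoidAlgebra ℤ G, p f → p g → p (f + g))
    (hsingle : ∀ (a : G) (c : ℤ), p (MonoidAlgebra.single a c)) :
    ∀ x : MonoidAlgebra ℤ G, p x := by
  intro x
  induction x using MonoidAlgebra.induction_linear with
  | zero => exact h0
  | add f g hf hg => exact hadd f g hf hg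
  | single a c => exact hsingle a c

/-! ### ring-theoretic gadgets on ℤ[A] -/

def augR : Rring n →+* ℤ :=
  MonoidAlgebra.liftNCRingHom (RingHom.id ℤ) 1 (fun _ _ => Commute.all _ _)

@[simp] lemma augR_single (a : Agrp n) (c : ℤ) : augR n (MonoidAlgebra.single a c) = c := by
  simp [augR, MonoidAlgebra.liftNCRingHom, MonoidAlgebra.liftNC_single]

lemma chiA_apply (a : Agrp n) : chiA n a = MonoidAlgebra.single a 1 := rfl

lemma Rring_one_def : (1 : Rring n) = MonoidAlgebra.single 1 1 := rfl

@[simp] lemma augR_chiA (a : Agrp n) : augR n (chiA n a) = 1 := by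
  rw [chiA_apply, augR_single]

lemma chiA_injective : Function.Injective (chiA n) := by
  intro a b hab
  rw [chiA_apply, chiA_apply] at hab
  rcases MonoidAlgebra.single_inj.mp hab with ⟨h, _⟩ | ⟨h, _⟩
  · exact h
  · exact absurd h one_ne_zero

lemma xg_ne_one (j : Fin n) : xg n j ≠ 1 := by
  intro h
  have h2 := congrArg Multiplicative.toAdd h
  rw [xg, toAdd_ofAdd] at h2
  have h3 : (1 : ℤ) = 0 := by
    have := congrArg (fun v => v j) h2
    simpa using this
  exact one_ne_zero h3

lemma chiA_xg_sub_one_ne_zero (j : Fin n) : chiA n (xg n j) - 1 ≠ 0 := by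
  rw [sub_ne_zero]
  intro h
  exact xg_ne_one n j (chiA_injective n (h.trans (map_one (chiA n)).symm))

lemma one_sub_chiA_xg_ne_zero (j : Fin n) : 1 - chiA n (xg n j) ≠ 0 := by
  intro h
  apply chiA_xg_sub_one_ne_zero n j
  rw [← neg_sub] at h
  rw [← neg_eq_zero]
  exact h

variable (l : Fin n)

def killl : (Fin n →₀ ℤ) →+ (Fin n →₀ ℤ) :=
  AddMonoidHom.id _ - (Finsupp.singleAddHom l).comp (Finsupp.applyAddHom l)

def ehom : Agrp n →* Agrp n := AddMonoidHom.toMultiplicative (killl n l)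

def eps : Rring n →+* Rring n := MonoidAlgebra.mapDomainRingHom ℤ (ehom n l)

@[simp] lemma eps_single (a : Agrp n) (c : ℤ) :
    eps n l (MonoidAlgebra.single a c) = MonoidAlgebra.single (ehom n l a) c := by
  simp [eps, MonoidAlgebra.mapDomainRingHom]

lemma eps_chiA (a : Agrp n) : eps n l (chiA n a) = chiA n (ehom n l a) := by
  rw [chiA_apply, chiA_apply, eps_single]

lemma ehom_toAdd (a : Agrp n) :
    Multiplicative.toAdd (ehom n l a)
      = Multiplicative.toAdd a - Finsupp.single l ((Multiplicative.toAdd a) l) := rfl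

lemma ehom_xg_ne (j : Fin n) (hj : j ≠ l) : ehom n l (xg n j) = xg n j := by
  apply Multiplicative.toAdd.injective
  rw [ehom_toAdd, xg, toAdd_ofAdd]
  rw [Finsupp.single_eq_of_ne' hj, Finsupp.single_zero, sub_zero]

lemma ehom_xg_l : ehom n l (xg n l) = 1 := by
  apply Multiplicative.toAdd.injective
  rw [ehom_toAdd, xg, toAdd_ofAdd, Finsupp.single_eq_same, sub_self]
  rfl

lemma eps_Xl : eps n l (chiA n (xg n l)) = 1 := by
  rw [eps_chiA, ehom_xg_l, map_one]

lemma eps_X_ne (j : Fin n) (hj : j ≠ l) :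
    eps n l (chiA n (xg n j)) = chiA n (xg n j) := by
  rw [eps_chiA, ehom_xg_ne n l j hj]

lemma augR_eps (r : Rring n) : augR n (eps n l r) = augR n r := by
  have h : (augR n).comp (eps n l) = augR n := by
    apply MonoidAlgebra.ringHom_ext
    · intro b
      rw [RingHom.comp_apply, eps_single, augR_single, augR_single]
    · intro a
      rw [RingHom.comp_apply, eps_single, augR_single, augR_single]
  exact DFunLike.congr_fun h r

def Dmap : Rring n →+ ℤ :=
  (Finsupp.liftAddHom fun a => (zmultiplesHom ℤ) ((Multiplicative.toAdd a) l)).comp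
    MonoidAlgebra.coeffAddEquiv.toAddMonoidHom

@[simp] lemma Dmap_single (a : Agrp n) (c : ℤ) :
    Dmap n l (MonoidAlgebra.single a c) = c * (Multiplicative.toAdd a) l := by
  have := Finsupp.liftAddHom_apply_single
    (fun a : Agrp n => (zmultiplesHom ℤ) ((Multiplicative.toAdd a) l)) a c
  rw [show Dmap n l (MonoidAlgebra.single a c)
    = (Finsupp.liftAddHom fun a : Agrp n => (zmultiplesHom ℤ) ((Multiplicative.toAdd a) l))
      (Finsupp.single a c) from rfl, this]
  simp [zmultiplesHom]

lemma Dmap_mul (x y : Rring n) :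
    Dmap n l (x * y) = Dmap n l x * augR n y + augR n x * Dmap n l y := by
  revert y
  refine MAZ_induction_linear
    (p := fun x => ∀ y : Rring n,
      Dmap n l (x * y) = Dmap n l x * augR n y + augR n x * Dmap n l y) ?_ ?_ ?_ x
  · intro y
    simp
  · intro f g hf hg y
    rw [add_mul, map_add, map_add, map_add, hf, hg]
    ring
  · intro a c
    refine MAZ_induction_linear
      (p := fun y : Rring n => Dmap n l (MonoidAlgebra.single a c * y)
        = Dmap n l (MonoidAlgebra.single a c) * augR n y
          + augR n (MonoidAlgebra.single a c) * Dmap n l y) ?_ ?_ ?_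
    · simp
    · intro f g hf hg
      rw [mul_add, map_add, map_add, map_add, hf, hg]
      ring
    · intro b d
      rw [MonoidAlgebra.single_mul_single, Dmap_single, Dmap_single, Dmap_single,
        augR_single, augR_single, toAdd_mul, Finsupp.add_apply]
      ring

lemma Dmap_one : Dmap n l 1 = 0 := by
  rw [Rring_one_def, Dmap_single]
  simp

lemma Dmap_Xl : Dmap n l (chiA n (xg n l)) = 1 := by
  rw [chiA_apply, Dmap_single, xg, toAdd_ofAdd, Finsupp.single_eq_same, one_mul]

lemma Dmap_E (a : Agrp n) : Dmap n l (chiA n a) = (Multiplicative.toAdd a) l := by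
  rw [chiA_apply, Dmap_single, one_mul]

end SEC5
noncomputable section SEC6

variable (n : ℕ) (i0 i1 l : Fin n)

lemma w0_at_i0 (h01 : i0 ≠ i1) (h0l : i0 ≠ l) :
    (Phi n (cF n i0 i1 l)).t i0 = 1 - chiA n (xg n i1) := by
  rw [Phi_cF_t]
  simp [Pi.single_apply, h01, h0l]

lemma w0_at_i1 (h01 : i0 ≠ i1) (h1l : i1 ≠ l) :
    (Phi n (cF n i0 i1 l)).t i1 = chiA n (xg n i0) - 1 := by
  rw [Phi_cF_t]
  simp [Pi.single_apply, Ne.symm h01, h1l]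

lemma w0_at_l (h0l : i0 ≠ l) (h1l : i1 ≠ l) :
    (Phi n (cF n i0 i1 l)).t l = 1 := by
  rw [Phi_cF_t]
  simp [Pi.single_apply, Ne.symm h0l, Ne.symm h1l]

lemma w0_at_other (j : Fin n) (hj0 : j ≠ i0) (hj1 : j ≠ i1) (hjl : j ≠ l) :
    (Phi n (cF n i0 i1 l)).t j = 0 := by
  rw [Phi_cF_t]
  simp [Pi.single_apply, hj0, hj1, hjl]

/-- the master component equation for a fixed point -/
lemma master (w : Fgrp n) (hfix : PsiH n i0 i1 l w = Phi n w) (j : Fin n) :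
    (1 - chiA n (abar n w)) * (Phi n (cF n i0 i1 l)).t j
      + (Phi n w).t j * (chiA n (xg n l) - 1)
      + (Phi n w).t l * (chiA n (xg n l) * ((Phi n (cF n i0 i1 l)).t j
          - (if j = l then 1 else 0))) = 0 := by
  have h0 := L_eq_zero n i0 i1 l w hfix
  rw [Lhom_apply] at h0
  have hj := congrArg (fun v => v j) h0
  simp only [Finset.sum_apply, Pi.smul_apply, smul_eq_mul, Pi.zero_apply] at hj
  have hsummand : ∀ i : Fin n, (Phi n w).t i * dvec n i0 i1 l i j
      = (Phi n w).t i * (1 - chiA n (xg n i)) * (Phi n (cF n i0 i1 l)).t j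
        + (if j = i then (Phi n w).t i * (chiA n (xg n l) - 1) else 0)
        + (if i = l then (Phi n w).t i * (chiA n (xg n l) * ((Phi n (cF n i0 i1 l)).t j
            - (if j = l then 1 else 0))) else 0) := by
    intro i
    rw [dvec_eq]
    simp only [Pi.add_apply, Pi.smul_apply, Pi.sub_apply, smul_eq_mul, Pi.single_apply,
      apply_ite (fun v : Tmod n => v j), Pi.zero_apply]
    by_cases hji : j = i <;> by_cases hil : i = l
    · simp [hji, hil]; try ring
    · simp [hji, hil]; try ring
    · have hjl : ¬ j = l := fun h => hji (h.trans hil.symm)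
      simp [hji, hil, hjl]; try ring
    · simp [hji, hil]; try ring
  rw [Finset.sum_congr rfl (fun i _ => hsummand i)] at hj
  rw [Finset.sum_add_distrib, Finset.sum_add_distrib, Finset.sum_ite_eq,
    Finset.sum_ite_eq'] at hj
  simp only [Finset.mem_univ, if_true] at hj
  have hS1 : ∑ i, (Phi n w).t i * (1 - chiA n (xg n i)) * (Phi n (cF n i0 i1 l)).t j
      = (1 - chiA n (abar n w)) * (Phi n (cF n i0 i1 l)).t j := by
    rw [← Finset.sum_mul]
    congr 1
    have hfox := fox_identity_A n w
    have h2 : ∑ i, (Phi n w).t i * (1 - chiA n (xg n i))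
        = - ∑ i, (Phi n w).t i * (chiA n (xg n i) - 1) := by
      rw [← Finset.sum_neg_distrib]
      apply Finset.sum_congr rfl
      intro i _
      ring
    rw [h2, hfox]
    ring
  rw [hS1] at hj
  exact hj

/-- a fixed point has trivial Magnus image -/
theorem fixed_Phi_eq_one (h01 : i0 ≠ i1) (h0l : i0 ≠ l) (h1l : i1 ≠ l)
    (w : Fgrp n) (hfix : PsiH n i0 i1 l w = Phi n w) : Phi n w = 1 := by
  set u := (Phi n w).t with hu
  set E := chiA n (abar n w) with hE
  set Xl := chiA n (xg n l) with hXl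
  set X0 := chiA n (xg n i0) with hX0
  set X1 := chiA n (xg n i1) with hX1
  -- equation (ii)
  have hml := master n i0 i1 l w hfix l
  rw [w0_at_l n i0 i1 l h0l h1l, if_pos rfl] at hml
  have hii : 1 - E + u l * (Xl - 1) = 0 := by linear_combination hml
  -- equation (iii)
  have hm0 := master n i0 i1 l w hfix i0
  rw [w0_at_i0 n i0 i1 l h01 h0l, if_neg h0l] at hm0
  have hiii : u l * (1 - X1) + u i0 * (Xl - 1) = 0 := by
    linear_combination hm0 - (1 - X1) * hii
  -- equation (iv)
  have hm1 := master n i0 i1 l w hfix i1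
  rw [w0_at_i1 n i0 i1 l h01 h1l, if_neg h1l] at hm1
  have hiv : u l * (X0 - 1) + u i1 * (Xl - 1) = 0 := by
    linear_combination hm1 - (X0 - 1) * hii
  -- equation (i)
  have hother : ∀ j : Fin n, j ≠ i0 → j ≠ i1 → j ≠ l → u j * (Xl - 1) = 0 := by
    intro j hj0 hj1 hjl
    have hmj := master n i0 i1 l w hfix j
    rw [w0_at_other n i0 i1 l j hj0 hj1 hjl, if_neg hjl] at hmj
    linear_combination hmj
  -- apply eps
  have heps_ul : eps n l (u l) = 0 := by
    have h := congrArg (eps n l) hiii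
    rw [map_add, map_mul, map_mul, map_sub, map_sub, map_one, map_zero, eps_Xl,
      hX1, eps_X_ne n l i1 h1l, sub_self, mul_zero, add_zero] at h
    rcases mul_eq_zero.mp h with h' | h'
    · exact h'
    · exact absurd h' (by rw [← hX1]; exact one_sub_chiA_xg_ne_zero n i1)
  have hepsE : eps n l E = 1 := by
    have h := congrArg (eps n l) hii
    rw [map_add, map_sub, map_mul, map_sub, map_one, map_zero, eps_Xl, sub_self,
      mul_zero, add_zero, sub_eq_zero] at h
    exact h.symm
  -- conclude abar w = 1
  have habar : abar n w = 1 := by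
    have hkill : ehom n l (abar n w) = 1 := by
      apply chiA_injective n
      rw [← eps_chiA, ← hE, hepsE, map_one]
    have hm : Multiplicative.toAdd (abar n w)
        = Finsupp.single l ((Multiplicative.toAdd (abar n w)) l) := by
      have := congrArg Multiplicative.toAdd hkill
      rw [ehom_toAdd] at this
      have h1 : Multiplicative.toAdd (1 : Agrp n) = 0 := rfl
      rw [h1, sub_eq_zero] at this
      exact this
    have haug_ul : augR n (u l) = 0 := by
      rw [← augR_eps n l (u l), heps_ul, map_zero]
    have hD : (Multiplicative.toAdd (abar n w)) l = 0 := by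
      have haugXl : augR n (Xl - 1) = 0 := by
        rw [map_sub, map_one, hXl, augR_chiA, sub_self]
      have h := congrArg (Dmap n l) hii
      rw [map_zero, map_add, map_sub, Dmap_one, Dmap_mul, haug_ul, haugXl] at h
      ring_nf at h
      have hDE : Dmap n l E = 0 := by linarith
      rw [hE, Dmap_E] at hDE
      exact hDE
    apply Multiplicative.toAdd.injective
    rw [hm, hD, Finsupp.single_zero]
    rfl
  -- now E = 1, and all coordinates of u vanish
  have hE1 : E = 1 := by rw [hE, habar, map_one]
  have hXlne : Xl - 1 ≠ 0 := by rw [hXl]; exact chiA_xg_sub_one_ne_zero n l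
  have hul : u l = 0 := by
    have h : u l * (Xl - 1) = 0 := by linear_combination hii + hE1
    rcases mul_eq_zero.mp h with h' | h'
    · exact h'
    · exact absurd h' hXlne
  have hui0 : u i0 = 0 := by
    have h : u i0 * (Xl - 1) = 0 := by linear_combination hiii - (1 - X1) * hul
    rcases mul_eq_zero.mp h with h' | h'
    · exact h'
    · exact absurd h' hXlne
  have hui1 : u i1 = 0 := by
    have h : u i1 * (Xl - 1) = 0 := by linear_combination hiv - (X0 - 1) * hul
    rcases mul_eq_zero.mp h with h' | h'
    · exact h'
    · exact absurd h' hXlne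
  have hall : ∀ j : Fin n, u j = 0 := by
    intro j
    by_cases hj0 : j = i0
    · rw [hj0]; exact hui0
    by_cases hj1 : j = i1
    · rw [hj1]; exact hui1
    by_cases hjl : j = l
    · rw [hjl]; exact hul
    have h := hother j hj0 hj1 hjl
    rcases mul_eq_zero.mp h with h' | h'
    · exact h'
    · exact absurd h' hXlne
  refine MW.ext ?_ ?_
  · show (Phi n w).a = (1 : Wgrp n).a
    rw [Phi_a, habar]
    rfl
  · show (Phi n w).t = (1 : Wgrp n).t
    funext j
    exact hall j

end SEC6

/-- For `n ≥ 3`, the automorphism `αₙ` of the free metabelian group, defined on the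
generators by `gᵢ ↦ [[g₁,g₂]gₙ, gᵢ]·gᵢ` for `i < n` and `gₙ ↦ [g₁,g₂]·gₙ`, has no
nontrivial fixed points. -/
theorem alpha_has_no_nontrivial_fixed_points (n : ℕ) (hn : 3 ≤ n)
    (α : FreeMetabelian n ≃* FreeMetabelian n)
    (hα₁ : ∀ i : Fin n, (i : ℕ) < n - 1 →
      α (gen n i) =
        ⁅⁅gen n ⟨0, by omega⟩, gen n ⟨1, by omega⟩⁆ * gen n ⟨n - 1, by omega⟩, gen n i⁆ *
          gen n i)
    (hα₂ : α (gen n ⟨n - 1, by omega⟩) =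
      ⁅gen n ⟨0, by omega⟩, gen n ⟨1, by omega⟩⁆ * gen n ⟨n - 1, by omega⟩) :
    ∀ g : FreeMetabelian n, α g = g → g = 1 := by
  
  intro g hg
  have h0n : 0 < n := by omega
  have h1n : 1 < n := by omega
  set i0 : Fin n := ⟨0, h0n⟩ with hi0
  set i1 : Fin n := ⟨1, h1n⟩ with hi1
  set l : Fin n := ⟨n - 1, by omega⟩ with hl
  have h01 : i0 ≠ i1 := by
    rw [hi0, hi1]; intro h; have h' : (0 : ℕ) = 1 := congrArg Fin.val h; omega
  have h0l : i0 ≠ l := by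
    rw [hi0, hl]; intro h; have h' : (0 : ℕ) = n - 1 := congrArg Fin.val h; omega
  have h1l : i1 ≠ l := by
    rw [hi1, hl]; intro h; have h' : (1 : ℕ) = n - 1 := congrArg Fin.val h; omega
  set π : Fgrp n →* FreeMetabelian n :=
    QuotientGroup.mk' (derivedSeries (Fgrp n) 2) with hπ
  have hβ : α.toMonoidHom.comp π = π.comp (betaF n i0 i1 l) := by
    apply FreeGroup.ext_hom
    intro i
    simp only [MonoidHom.comp_apply]
    rw [betaF, FreeGroup.lift_apply_of]
    have hπcF : π (cF n i0 i1 l)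
        = ⁅⁅gen n i0, gen n i1⁆ * gen n l, gen n i⁆ * gen n i → True := fun _ => trivial
    by_cases hi : i = l
    · rw [if_pos hi, map_mul, map_commutatorElement]
      subst hi
      exact hα₂
    · rw [if_neg hi, map_mul, map_commutatorElement, cF, map_mul, map_commutatorElement]
      have hlt : (i : ℕ) < n - 1 := by
        have h1 : (i : ℕ) < n := i.isLt
        have h2 : (i : ℕ) ≠ n - 1 := by
          intro h
          apply hi
          rw [hl]
          exact Fin.ext h
        omega
      exact hα₁ i hlt
  obtain ⟨w, rfl⟩ := QuotientGroup.mk'_surjective (derivedSeries (Fgrp n) 2) g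
  have hπβ : π (betaF n i0 i1 l w) = π w := by
    have h := congrArg (fun h => h w) hβ
    simp only [MonoidHom.comp_apply] at h
    rw [← h]
    exact hg
  have hfixW : PsiH n i0 i1 l w = Phi n w := by
    set φ : FreeMetabelian n →* Wgrp n :=
      QuotientGroup.lift _ (Phi n) (Phi_ker n) with hφ
    have hfac : ∀ v : Fgrp n, φ (π v) = Phi n v := by
      intro v
      rw [hπ, hφ]
      rfl
    rw [PsiH, MonoidHom.comp_apply, ← hfac, ← hfac, hπβ]
  have h1 : Phi n w = 1 := fixed_Phi_eq_one n i0 i1 l h01 h0l h1l w hfixW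
  have hmem := magnus_injective n w h1
  exact (QuotientGroup.eq_one_iff w).mpr hmem
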